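/- Work with the Euclidean metric on ℝ^d. Let P be a probability distribution on X ⊆ B_d, fix an integer k ≥ 1, a real p ≥ 1, ε ∈ (0, 1/4], and β ≥ 1. Let x ↦ x̃ be a measurable discretization with x̃ ∈ B_d and ‖x − x̃‖₂ ≤ ε·OPT/(2p) for all x ∈ X. Suppose π : ℝ^d → ℝ^m maps {x̃ : x ∈ X} into a Euclidean ball B_m of diameter 1 and satisfies, for every k-partition 𝒞 of X, (1+ε)^{−1}·c̃ost(𝒞) ≤ c̃ost_π(𝒞) ≤ (1+ε)·c̃ost(𝒞), where c̃ost is the partition cost of the discretized distribution (points x̃, centers in B_d) and c̃ost_π is the partition cost of the projected discretized distribution (points π(x̃), centers in B_m). Let G = {g⁽¹⁾,…,g⁽ᵏ⁾} ⊆ B_m satisfy E_{x∼P}[min_j ‖π(x̃) − g⁽ʲ⁾‖₂^p] ≤ β·ÕPT_π, where ÕPT_π is the optimal (k,p)-clustering cost of the projected discretized distribution with centers in B_m. Then the partition 𝒞 of X defined by C⁽ʲ⁾ := {x ∈ X : g⁽ʲ⁾ is the nearest point of G to π(x̃)} satisfies cost(𝒞) ≤ (1+ε)⁴·β·OPT.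 -/

import Mathlib

open MeasureTheory

/-- The statistical `(k,p)`-partition cost of the labelling `g` for the pushed-forward
points `φ x`, with centers ranging over the Euclidean ball of diameter 1:
`inf_{u⁽¹⁾,…,u⁽ᵏ⁾ ∈ B} E_{x∼P}[‖φ x - u^{(g x)}‖₂^p]`. -/
noncomputable def pCost {α : Type*} [MeasurableSpace α] {m k : ℕ}
    (p : ℝ) (P : Measure α) (φ : α → EuclideanSpace ℝ (Fin m))
    (g : α → Fin k) : ℝ :=
  ⨅ u : Fin k → (Metric.closedBall (0 : EuclideanSpace ℝ (Fin m)) (1 / 2)),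
    ∫ x, ‖φ x - (u (g x) : EuclideanSpace ℝ (Fin m))‖ ^ p ∂P

/-- The optimal statistical `(k,p)`-clustering cost of the pushed-forward points `φ x`,
with `k` centers ranging over the Euclidean ball of diameter 1. -/
noncomputable def pOPT {α : Type*} [MeasurableSpace α] {m : ℕ}
    (p : ℝ) (P : Measure α) (φ : α → EuclideanSpace ℝ (Fin m)) (k : ℕ) : ℝ :=
  ⨅ u : Fin k → (Metric.closedBall (0 : EuclideanSpace ℝ (Fin m)) (1 / 2)),
    ∫ x, ⨅ j, ‖φ x - (u j : EuclideanSpace ℝ (Fin m))‖ ^ p ∂P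

/-! Moving every point by at most `δ` changes the `p`-th root of a clustering cost by at most `δ`
(Minkowski's inequality). Since `OPT ≤ 1`, the shift `δ = ε·OPT/(2p)` is at most
`(ε/(2p))·c^{1/p}` for every cost `c ≥ OPT`, and `(c^{1/p} + δ)^p ≤ (1 + ε/(2p))^p·c ≤ (1+ε)·c`.
So the discretization costs a factor `1+ε` each time it is crossed, and
`c̃ost(𝒞) ≤ (1+ε)·c̃ost_π(𝒞) ≤ (1+ε)·β·ÕPT_π ≤ (1+ε)²·β·ÕPT ≤ (1+ε)³·β·OPT`; here
`ÕPT_π ≤ (1+ε)·ÕPT` comes from applying the guarantee for `π` to a measurable nearest-center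
partition of any `k` centers. Crossing the discretization once more gives the bound on
`cost(𝒞)`. -/

open Metric Set

local notation "𝔹[" m "]" => closedBall (0 : EuclideanSpace ℝ (Fin m)) (1 / 2 : ℝ)

lemma norm_sub_le_one_of_mem_closedBall {E : Type*} [SeminormedAddCommGroup E] {a b : E}
    (ha : a ∈ closedBall 0 (1 / 2)) (hb : b ∈ closedBall 0 (1 / 2)) : ‖a - b‖ ≤ 1 := by
  rw [mem_closedBall_zero_iff] at ha hb
  linarith [norm_sub_le a b]

lemma one_add_div_two_mul_rpow_le {p ε : ℝ} (hp : 0 < p) (hε0 : 0 ≤ ε) (hε1 : ε ≤ 1) :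
    (1 + ε / (2 * p)) ^ p ≤ 1 + ε := calc
  (1 + ε / (2 * p)) ^ p ≤ Real.exp (ε / (2 * p)) ^ p := by
      gcongr
      linarith [Real.add_one_le_exp (ε / (2 * p))]
  _ = Real.exp (ε / 2) := by rw [← Real.exp_mul]; field_simp
  _ ≤ 1 / (1 - ε / 2) := Real.exp_bound_div_one_sub_of_interval (by positivity) (by linarith)
  _ ≤ 1 + ε := by rw [div_le_iff₀ (by linarith)]; nlinarith

lemma Monotone.le_map_ciInf {α β ι : Type*} [ConditionallyCompleteLinearOrder α]
    [TopologicalSpace α] [OrderTopology α] [ConditionallyCompleteLinearOrder β]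
    [TopologicalSpace β] [OrderClosedTopology β] [Nonempty ι] {f : α → β} (hf : Monotone f)
    (hfc : Continuous f) {J : ι → α} (hJ : BddBelow (range J)) {b : β}
    (h : ∀ i, b ≤ f (J i)) : b ≤ f (⨅ i, J i) := by
  rw [hf.map_ciInf_of_continuousAt hfc.continuousAt hJ]
  exact le_ciInf h

/-- The `max` keeps this monotone on all of `ℝ`: `Real.rpow` is not monotone at negative bases. -/
noncomputable def costShift (p δ t : ℝ) : ℝ := (max t 0 ^ p⁻¹ + δ) ^ p

lemma costShift_of_nonneg {p δ t : ℝ} (ht : 0 ≤ t) : costShift p δ t = (t ^ p⁻¹ + δ) ^ p := by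
  rw [costShift, max_eq_left ht]

lemma monotone_costShift {p δ : ℝ} (hp : 0 ≤ p) (hδ : 0 ≤ δ) : Monotone (costShift p δ) := by
  intro a b hab
  unfold costShift
  gcongr

lemma continuous_costShift {p δ : ℝ} (hp : 0 ≤ p) : Continuous (costShift p δ) :=
  (((continuous_id.max continuous_const).rpow_const fun _ => Or.inr (inv_nonneg.2 hp)).add
    continuous_const).rpow_const fun _ => Or.inr hp

lemma costShift_le_one_add_mul {p ε s t : ℝ} (hp : 1 ≤ p) (hε0 : 0 ≤ ε) (hε1 : ε ≤ 1)
    (hs0 : 0 ≤ s) (hs1 : s ≤ 1) (hst : s ≤ t) :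
    costShift p (ε * s / (2 * p)) t ≤ (1 + ε) * t := by
  have hp0 : 0 < p := by linarith
  have ht : 0 ≤ t := hs0.trans hst
  have hs : s ≤ t ^ p⁻¹ :=
    (Real.self_le_rpow_of_le_one hs0 hs1 (inv_le_one_of_one_le₀ hp)).trans (by gcongr)
  calc costShift p (ε * s / (2 * p)) t = (t ^ p⁻¹ + ε * s / (2 * p)) ^ p :=
        costShift_of_nonneg ht
    _ ≤ (t ^ p⁻¹ * (1 + ε / (2 * p))) ^ p := by
        gcongr
        rw [mul_one_add, mul_div_assoc', mul_comm _ ε]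
        gcongr
    _ = t * (1 + ε / (2 * p)) ^ p := by
        rw [Real.mul_rpow (by positivity) (by positivity), ← Real.rpow_mul ht,
          inv_mul_cancel₀ hp0.ne', Real.rpow_one]
    _ ≤ t * (1 + ε) := by gcongr; exact one_add_div_two_mul_rpow_le hp0 hε0 hε1
    _ = (1 + ε) * t := mul_comm _ _

section Measure

variable {α : Type*} [MeasurableSpace α] {P : Measure α}

lemma integral_norm_rpow_le_of_norm_le_add [IsProbabilityMeasure P] {E F : Type*}
    [NormedAddCommGroup E] [NormedAddCommGroup F] {p δ : ℝ} (hp : 1 ≤ p) (hδ : 0 ≤ δ)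
    {f : α → E} {g : α → F} (hf : AEStronglyMeasurable f P) (hg : MemLp g (ENNReal.ofReal p) P)
    (hfg : ∀ᵐ x ∂P, ‖f x‖ ≤ ‖g x‖ + δ) :
    ∫ x, ‖f x‖ ^ p ∂P ≤ ((∫ x, ‖g x‖ ^ p ∂P) ^ p⁻¹ + δ) ^ p := by
  set q := ENNReal.ofReal p
  have hp0 : 0 < p := by linarith
  have hq0 : q ≠ 0 := by simpa [q] using hp0
  have hqtop : q ≠ ⊤ := ENNReal.ofReal_ne_top
  have hq : q.toReal = p := ENNReal.toReal_ofReal hp0.le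
  have hgδ : MemLp (fun x => ‖g x‖ + δ) q P := hg.norm.add (memLp_const δ)
  have hf' : MemLp f q P :=
    hgδ.mono hf (hfg.mono fun x hx => by rwa [Real.norm_of_nonneg (by positivity)])
  have key : eLpNorm f q P ≤ eLpNorm g q P + ENNReal.ofReal δ := calc
    eLpNorm f q P ≤ eLpNorm (fun x => ‖g x‖ + δ) q P := eLpNorm_mono_ae_real hfg
    _ ≤ eLpNorm (fun x => ‖g x‖) q P + eLpNorm (fun _ => δ) q P :=
        eLpNorm_add_le hg.norm.1 aestronglyMeasurable_const (by simpa [q] using hp)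
    _ = eLpNorm g q P + ENNReal.ofReal δ := by
        rw [eLpNorm_norm, eLpNorm_const' _ hq0 hqtop]
        simp [measure_univ, Real.enorm_of_nonneg hδ]
  rw [hf'.eLpNorm_eq_integral_rpow_norm hq0 hqtop, hg.eLpNorm_eq_integral_rpow_norm hq0 hqtop,
    hq, ← ENNReal.ofReal_add (by positivity) hδ,
    ENNReal.ofReal_le_ofReal_iff (by positivity)] at key
  calc ∫ x, ‖f x‖ ^ p ∂P = ((∫ x, ‖f x‖ ^ p ∂P) ^ p⁻¹) ^ p := by
        rw [← Real.rpow_mul (integral_nonneg fun _ => by positivity), inv_mul_cancel₀ hp0.ne',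
          Real.rpow_one]
    _ ≤ _ := by gcongr

lemma exists_measurable_argmin {k : ℕ} [Nonempty (Fin k)] {f : Fin k → α → ℝ}
    (hf : ∀ j, Measurable (f j)) :
    ∃ g : α → Fin k, Measurable g ∧ ∀ x j, f (g x) x ≤ f j x := by
  classical
  let IsArgmin : α → ℕ → Prop := fun x n => ∃ hn : n < k, ∀ j, f ⟨n, hn⟩ x ≤ f j x
  have hex : ∀ x, ∃ n, IsArgmin x n := fun x =>
    let ⟨j, hj⟩ := Finite.exists_min (f · x)
    ⟨j, j.2, hj⟩
  have hmeas : ∀ n, MeasurableSet {x | IsArgmin x n} := by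
    intro n
    by_cases hn : n < k
    · simpa [IsArgmin, hn, Set.ofPred_forall] using
        MeasurableSet.iInter fun j => measurableSet_le (hf ⟨n, hn⟩) (hf j)
    · simp [IsArgmin, hn]
  refine ⟨fun x => ⟨Nat.find (hex x), (Nat.find_spec (hex x)).1⟩,
    measurable_to_countable' fun j => ?_, fun x => (Nat.find_spec (hex x)).2⟩
  convert measurable_find hex hmeas (measurableSet_singleton (j : ℕ)) using 1
  ext x
  simp [Fin.ext_iff]

lemma bddBelow_range_integral {ι : Sort*} {F : ι → α → ℝ} (hF : ∀ i x, 0 ≤ F i x) :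
    BddBelow (range fun i => ∫ x, F i x ∂P) :=
  ⟨0, forall_mem_range.2 fun i => integral_nonneg (hF i)⟩

variable {m k : ℕ} {p : ℝ} {φ : α → EuclideanSpace ℝ (Fin m)}

instance : Nonempty (𝔹[m]) := ⟨⟨0, mem_closedBall_self (by norm_num)⟩⟩

lemma pOPT_nonneg : 0 ≤ pOPT p P φ k :=
  Real.iInf_nonneg fun _ => integral_nonneg fun _ => Real.iInf_nonneg fun _ => by positivity

lemma pOPT_le_one [IsProbabilityMeasure P] [Nonempty (Fin k)] (hp : 0 ≤ p)
    (hφB : ∀ᵐ x ∂P, φ x ∈ 𝔹[m]) : pOPT p P φ k ≤ 1 := by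
  obtain ⟨u⟩ : Nonempty (Fin k → 𝔹[m]) := inferInstance
  obtain ⟨j⟩ := ‹Nonempty (Fin k)›
  refine (ciInf_le (bddBelow_range_integral fun _ _ =>
    Real.iInf_nonneg fun _ => by positivity) u).trans ?_
  calc ∫ x, ⨅ j, ‖φ x - u j‖ ^ p ∂P ≤ ∫ _, (1 : ℝ) ∂P := by
        refine integral_mono_of_nonneg
          (ae_of_all _ fun _ => Real.iInf_nonneg fun _ => by positivity)
          (integrable_const 1) (hφB.mono fun x hx => ?_)
        exact (ciInf_le (finite_range _).bddBelow j).trans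
          (Real.rpow_le_one (norm_nonneg _) (norm_sub_le_one_of_mem_closedBall hx (u j).2) hp)
    _ = 1 := by simp

lemma memLp_sub_center [IsFiniteMeasure P] (hφ : Measurable φ) (hφB : ∀ᵐ x ∂P, φ x ∈ 𝔹[m])
    (u : Fin k → 𝔹[m]) {g : α → Fin k} (hg : Measurable g) (q : ENNReal) :
    MemLp (fun x => φ x - u (g x)) q P :=
  MemLp.of_bound (hφ.sub ((measurable_of_finite fun j =>
      (u j : EuclideanSpace ℝ (Fin m))).comp hg)).aestronglyMeasurable 1
    (hφB.mono fun x hx => norm_sub_le_one_of_mem_closedBall hx (u (g x)).2)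

lemma pOPT_le_pCost [IsFiniteMeasure P] (hp : 0 ≤ p) (hφ : Measurable φ)
    (hφB : ∀ᵐ x ∂P, φ x ∈ 𝔹[m]) {g : α → Fin k} (hg : Measurable g) :
    pOPT p P φ k ≤ pCost p P φ g := by
  refine le_ciInf fun u => (ciInf_le (bddBelow_range_integral fun _ _ =>
    Real.iInf_nonneg fun _ => by positivity) u).trans (integral_mono_of_nonneg
      (ae_of_all _ fun _ => Real.iInf_nonneg fun _ => by positivity) ?_
      (ae_of_all _ fun x => ciInf_le (finite_range _).bddBelow (g x)))
  simpa [ENNReal.toReal_ofReal hp] using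
    (memLp_sub_center hφ hφB u hg (ENNReal.ofReal p)).integrable_norm_rpow'

lemma pCost_le_integral_iInf (hp : 0 ≤ p) {g : α → Fin k} (u : Fin k → 𝔹[m])
    (hg : ∀ x j, ‖φ x - u (g x)‖ ≤ ‖φ x - u j‖) :
    pCost p P φ g ≤ ∫ x, ⨅ j, ‖φ x - u j‖ ^ p ∂P := by
  refine (ciInf_le (bddBelow_range_integral fun _ _ => by positivity) u).trans_eq
    (integral_congr_ae (ae_of_all _ fun x => ?_))
  have : Nonempty (Fin k) := ⟨g x⟩
  exact le_antisymm (le_ciInf fun j => Real.rpow_le_rpow (norm_nonneg _) (hg x j) hp)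
    (ciInf_le (finite_range _).bddBelow (g x))

lemma exists_pCost_le_integral_iInf [Nonempty (Fin k)] (hp : 0 ≤ p) (hφ : Measurable φ)
    (u : Fin k → 𝔹[m]) :
    ∃ g : α → Fin k, Measurable g ∧ pCost p P φ g ≤ ∫ x, ⨅ j, ‖φ x - u j‖ ^ p ∂P := by
  obtain ⟨g, hg, hmin⟩ := exists_measurable_argmin fun j => (hφ.sub_const (u j : _)).norm
  exact ⟨g, hg, pCost_le_integral_iInf hp u hmin⟩

lemma pCost_le_costShift [IsProbabilityMeasure P] {ψ : α → EuclideanSpace ℝ (Fin m)} {δ : ℝ}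
    (hp : 1 ≤ p) (hδ : 0 ≤ δ) (hφ : Measurable φ) (hψ : Measurable ψ)
    (hψB : ∀ᵐ x ∂P, ψ x ∈ 𝔹[m]) (hφψ : ∀ᵐ x ∂P, ‖φ x - ψ x‖ ≤ δ) {g : α → Fin k}
    (hg : Measurable g) : pCost p P φ g ≤ costShift p δ (pCost p P ψ g) := by
  refine (monotone_costShift (by linarith) hδ).le_map_ciInf (continuous_costShift (by linarith))
    (bddBelow_range_integral fun _ _ => by positivity) fun u => ?_
  rw [costShift_of_nonneg (integral_nonneg fun _ => by positivity)]
  refine (ciInf_le (bddBelow_range_integral fun _ _ => by positivity) u).trans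
    (integral_norm_rpow_le_of_norm_le_add hp hδ
      (hφ.sub ((measurable_of_finite fun j => (u j : EuclideanSpace ℝ (Fin m))).comp
        hg)).aestronglyMeasurable
      (memLp_sub_center hψ hψB u hg _) ?_)
  filter_upwards [hφψ] with x hx
  linarith [norm_sub_le_norm_sub_add_norm_sub (φ x) (ψ x) (u (g x))]

lemma pOPT_le_of_pCost_le [IsFiniteMeasure P] [Nonempty (Fin k)] {n : ℕ}
    {ψ : α → EuclideanSpace ℝ (Fin n)} {F : ℝ → ℝ} (hFm : Monotone F) (hFc : Continuous F)
    (hp : 0 ≤ p) (hφ : Measurable φ) (hψ : Measurable ψ) (hψB : ∀ᵐ x ∂P, ψ x ∈ 𝔹[n])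
    (h : ∀ g : α → Fin k, Measurable g → pCost p P ψ g ≤ F (pCost p P φ g)) :
    pOPT p P ψ k ≤ F (pOPT p P φ k) := by
  refine hFm.le_map_ciInf hFc (bddBelow_range_integral fun _ _ =>
    Real.iInf_nonneg fun _ => by positivity) fun u => ?_
  obtain ⟨g, hg, hgu⟩ := exists_pCost_le_integral_iInf hp hφ u
  exact (pOPT_le_pCost hp hψ hψB hg).trans ((h g hg).trans (hFm hgu))

lemma pOPT_le_costShift [IsProbabilityMeasure P] [Nonempty (Fin k)]
    {ψ : α → EuclideanSpace ℝ (Fin m)} {δ : ℝ} (hp : 1 ≤ p) (hδ : 0 ≤ δ) (hφ : Measurable φ)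
    (hψ : Measurable ψ) (hφB : ∀ᵐ x ∂P, φ x ∈ 𝔹[m]) (hψB : ∀ᵐ x ∂P, ψ x ∈ 𝔹[m])
    (hφψ : ∀ᵐ x ∂P, ‖φ x - ψ x‖ ≤ δ) : pOPT p P φ k ≤ costShift p δ (pOPT p P ψ k) :=
  pOPT_le_of_pCost_le (monotone_costShift (by linarith) hδ) (continuous_costShift (by linarith))
    (by linarith) hψ hφ hφB fun _ hg => pCost_le_costShift hp hδ hφ hψ hψB hφψ hg

lemma pOPT_le_mul_of_pCost_le [IsFiniteMeasure P] [Nonempty (Fin k)] {n : ℕ}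
    {ψ : α → EuclideanSpace ℝ (Fin n)} {c : ℝ} (hc : 0 ≤ c) (hp : 0 ≤ p) (hφ : Measurable φ)
    (hψ : Measurable ψ) (hψB : ∀ᵐ x ∂P, ψ x ∈ 𝔹[n])
    (h : ∀ g : α → Fin k, Measurable g → pCost p P ψ g ≤ c * pCost p P φ g) :
    pOPT p P ψ k ≤ c * pOPT p P φ k :=
  pOPT_le_of_pCost_le (monotone_id.const_mul hc) (continuous_const_mul c) hp hφ hψ hψB h

end Measure

theorem dimension_reduction_lifted_partition_general {d m k : ℕ}
    (p ε β : ℝ) (hp : 1 ≤ p) (hε0 : 0 < ε) (hε : ε ≤ 1 / 4) (hβ : 1 ≤ β)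
    (P : Measure (EuclideanSpace ℝ (Fin d))) [IsProbabilityMeasure P]
    (X : Set (EuclideanSpace ℝ (Fin d)))
    (hX : X ⊆ Metric.closedBall (0 : EuclideanSpace ℝ (Fin d)) (1 / 2))
    (hPX : ∀ᵐ x ∂P, x ∈ X)
    (T : EuclideanSpace ℝ (Fin d) → EuclideanSpace ℝ (Fin d)) (hTmeas : Measurable T)
    (hTball : ∀ x ∈ X, T x ∈ Metric.closedBall (0 : EuclideanSpace ℝ (Fin d)) (1 / 2))
    (hTclose : ∀ x ∈ X, ‖x - T x‖ ≤ ε * pOPT p P id k / (2 * p))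
    (π : EuclideanSpace ℝ (Fin d) → EuclideanSpace ℝ (Fin m)) (hπmeas : Measurable π)
    (hπball : ∀ x ∈ X, π (T x) ∈ Metric.closedBall (0 : EuclideanSpace ℝ (Fin m)) (1 / 2))
    (hpres : ∀ g : EuclideanSpace ℝ (Fin d) → Fin k, Measurable g →
      (1 + ε)⁻¹ * pCost p P T g ≤ pCost p P (fun x => π (T x)) g ∧
      pCost p P (fun x => π (T x)) g ≤ (1 + ε) * pCost p P T g)
    (G : Fin k → EuclideanSpace ℝ (Fin m))
    (hG : ∀ j, G j ∈ Metric.closedBall (0 : EuclideanSpace ℝ (Fin m)) (1 / 2))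
    (hGapx : ∫ x, (⨅ j, ‖π (T x) - G j‖ ^ p) ∂P ≤ β * pOPT p P (fun x => π (T x)) k)
    (h : EuclideanSpace ℝ (Fin d) → Fin k) (hhmeas : Measurable h)
    (hnear : ∀ x, ∀ j, ‖π (T x) - G (h x)‖ ≤ ‖π (T x) - G j‖) :
    pCost p P id h ≤ (1 + ε) ^ 4 * β * pOPT p P id k := by
  have : Nonempty (Fin k) := ⟨h 0⟩
  have hp0 : 0 ≤ p := by linarith
  have hε1 : ε ≤ 1 := by linarith
  set OPT := pOPT p P id k
  set δ := ε * OPT / (2 * p)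
  have hXB : ∀ᵐ x ∂P, id x ∈ 𝔹[d] := hPX.mono hX
  have hTB : ∀ᵐ x ∂P, T x ∈ 𝔹[d] := hPX.mono hTball
  have hTδ : ∀ᵐ x ∂P, ‖x - T x‖ ≤ δ := hPX.mono hTclose
  have hOPT0 : 0 ≤ OPT := pOPT_nonneg
  have hOPT1 : OPT ≤ 1 := pOPT_le_one hp0 hXB
  have hδ : 0 ≤ δ := by positivity
  have hOPT_T : pOPT p P T k ≤ (1 + ε) * OPT :=
    (pOPT_le_costShift hp hδ hTmeas measurable_id hTB hXB
      (hTδ.mono fun x hx => by rwa [norm_sub_rev])).trans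
      (costShift_le_one_add_mul hp hε0.le hε1 hOPT0 hOPT1 le_rfl)
  have hOPT_πT : pOPT p P (fun x => π (T x)) k ≤ (1 + ε) * pOPT p P T k :=
    pOPT_le_mul_of_pCost_le (by positivity) hp0 hTmeas (hπmeas.comp hTmeas) (hPX.mono hπball)
      fun g hg => (hpres g hg).2
  have hcost_T : pCost p P T h ≤ (1 + ε) ^ 3 * β * OPT := calc
    pCost p P T h ≤ (1 + ε) * pCost p P (fun x => π (T x)) h :=
        (inv_mul_le_iff₀ (by positivity)).1 (hpres h hhmeas).1
    _ ≤ (1 + ε) * (β * pOPT p P (fun x => π (T x)) k) := by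
        gcongr
        exact (pCost_le_integral_iInf hp0 (fun j => ⟨G j, hG j⟩) hnear).trans hGapx
    _ ≤ (1 + ε) * (β * ((1 + ε) * ((1 + ε) * OPT))) := by gcongr; exact hOPT_πT.trans (by gcongr)
    _ = (1 + ε) ^ 3 * β * OPT := by ring
  have hOPT_le : OPT ≤ (1 + ε) ^ 3 * β * OPT :=
    le_mul_of_one_le_left hOPT0 (one_le_mul_of_one_le_of_one_le (one_le_pow₀ (by linarith)) hβ)
  calc pCost p P id h ≤ costShift p δ (pCost p P T h) :=
        pCost_le_costShift hp hδ measurable_id hTmeas hTB hTδ hhmeas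
    _ ≤ costShift p δ ((1 + ε) ^ 3 * β * OPT) := monotone_costShift hp0 hδ hcost_T
    _ ≤ (1 + ε) * ((1 + ε) ^ 3 * β * OPT) :=
        costShift_le_one_add_mul hp hε0.le hε1 hOPT0 hOPT1 hOPT_le
    _ = (1 + ε) ^ 4 * β * OPT := by ring

/-- Dimensionality reduction for statistical Euclidean `(k,p)`-clustering: if the
discretization `T` moves points by at most `ε·OPT/(2p)`, the projection `π` preserves
partition costs of the discretized distribution up to `1 ± ε` factors, and
`G = {g⁽¹⁾,…,g⁽ᵏ⁾} ⊆ B_m` is a `β`-approximate solution for the projected discretized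
distribution, then the partition of the input space induced by assigning `x` to the
nearest center of `G` from `π(x̃)` has cost at most `(1+ε)⁴·β·OPT`. -/
theorem dimension_reduction_lifted_partition {d m k : ℕ} (hk : 1 ≤ k)
    (p ε β : ℝ) (hp : 1 ≤ p) (hε0 : 0 < ε) (hε : ε ≤ 1 / 4) (hβ : 1 ≤ β)
    (P : Measure (EuclideanSpace ℝ (Fin d))) [IsProbabilityMeasure P]
    (X : Set (EuclideanSpace ℝ (Fin d)))
    (hX : X ⊆ Metric.closedBall (0 : EuclideanSpace ℝ (Fin d)) (1 / 2))
    (hPX : ∀ᵐ x ∂P, x ∈ X)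
    (T : EuclideanSpace ℝ (Fin d) → EuclideanSpace ℝ (Fin d)) (hTmeas : Measurable T)
    (hTball : ∀ x ∈ X, T x ∈ Metric.closedBall (0 : EuclideanSpace ℝ (Fin d)) (1 / 2))
    (hTclose : ∀ x ∈ X, ‖x - T x‖ ≤ ε * pOPT p P id k / (2 * p))
    (π : EuclideanSpace ℝ (Fin d) → EuclideanSpace ℝ (Fin m)) (hπmeas : Measurable π)
    (hπball : ∀ x ∈ X, π (T x) ∈ Metric.closedBall (0 : EuclideanSpace ℝ (Fin m)) (1 / 2))
    (hpres : ∀ g : EuclideanSpace ℝ (Fin d) → Fin k, Measurable g →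
      (1 + ε)⁻¹ * pCost p P T g ≤ pCost p P (fun x => π (T x)) g ∧
      pCost p P (fun x => π (T x)) g ≤ (1 + ε) * pCost p P T g)
    (G : Fin k → EuclideanSpace ℝ (Fin m))
    (hG : ∀ j, G j ∈ Metric.closedBall (0 : EuclideanSpace ℝ (Fin m)) (1 / 2))
    (hGapx : ∫ x, (⨅ j, ‖π (T x) - G j‖ ^ p) ∂P ≤ β * pOPT p P (fun x => π (T x)) k)
    (h : EuclideanSpace ℝ (Fin d) → Fin k) (hhmeas : Measurable h)
    (hnear : ∀ x, ∀ j, ‖π (T x) - G (h x)‖ ≤ ‖π (T x) - G j‖) :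
    pCost p P id h ≤ (1 + ε) ^ 4 * β * pOPT p P id k :=
  dimension_reduction_lifted_partition_general p ε β hp hε0 hε hβ P X hX hPX T hTmeas hTball hTclose
    π hπmeas hπball hpres G hG hGapx h hhmeas hnear
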